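/- Consider the two-mass two-spring potentials V(q₁,q₂) = (k₁/2)(|q₁| − ℓ₁)² + (k₂/2)(|q₂ − q₁| − ℓ₂)² and Ṽ(q₁, q̃₂) = (k₁/2)(|q₁| − ℓ₁)² + (k̃₂/2)(|q̃₂ − q₁| − ℓ̃₂)², with k₂, k̃₂ > 0. Fix q₁, q₂ ∈ ℝ with q₂ − q₁ > 0. If a = (k₂/k̃₂ − 1)(q₂ − q₁) − (k₂/k̃₂)ℓ₂ + ℓ̃₂ and q₂ + a − q₁ > 0, then ∂V/∂q₁ (q₁,q₂) = ∂Ṽ/∂q₁ (q₁, q₂ + a) and ∂V/∂q₂ (q₁,q₂) = ∂Ṽ/∂q̃₂ (q₁, q₂ + a). -/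

import Mathlib

/-!
On the region `q₁ < q₂` the second spring acts on the two masses through its force
`k₂ (q₂ - q₁ - ℓ₂)` alone, with opposite signs. The shift `a` is chosen exactly so that
`k₂ (q₂ - q₁ - ℓ₂) = k̃₂ (q₂ + a - q₁ - ℓ̃₂)`, and the first spring is common to both potentials.
-/

-- No differentiability of `f` is needed: otherwise both sides are the junk value `0`.
theorem deriv_fun_add_congr_of_hasDerivAt {𝕜 F : Type*} [NontriviallyNormedField 𝕜]
    [NormedAddCommGroup F] [NormedSpace 𝕜 F] (f : 𝕜 → F) {g h : 𝕜 → F} {c : F} {x : 𝕜}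
    (hg : HasDerivAt g c x) (hh : HasDerivAt h c x) :
    deriv (fun y => f y + g y) x = deriv (fun y => f y + h y) x := by
  by_cases hf : DifferentiableAt 𝕜 f x
  · rw [deriv_fun_add hf hg.differentiableAt, deriv_fun_add hf hh.differentiableAt, hg.deriv,
      hh.deriv]
  · rw [deriv_zero_of_not_differentiableAt (by rwa [hg.differentiableAt.fun_add_iff_left]),
      deriv_zero_of_not_differentiableAt (by rwa [hh.differentiableAt.fun_add_iff_left])]

noncomputable def springEnergy (k ℓ d : ℝ) : ℝ := k / 2 * (|d| - ℓ) ^ 2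

theorem hasDerivAt_springEnergy (k ℓ : ℝ) {d : ℝ} (hd : 0 < d) :
    HasDerivAt (springEnergy k ℓ) (k * (d - ℓ)) d := by
  have hsmooth : HasDerivAt (fun e => k / 2 * (e - ℓ) ^ 2) (k * (d - ℓ)) d :=
    ((((hasDerivAt_id' d).sub_const ℓ).fun_pow 2).const_mul (k / 2)).congr_deriv (by ring)
  refine hsmooth.congr_of_eventuallyEq ?_
  filter_upwards [Ioi_mem_nhds hd] with e he
  rw [springEnergy, abs_of_pos he]

/-- Potential of a mass at `x` tied to the origin by spring `(k₁, ℓ₁)` and to a mass at `y`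
by spring `(k₂, ℓ₂)`. -/
noncomputable def twoSpringPotential (k₁ ℓ₁ k₂ ℓ₂ x y : ℝ) : ℝ :=
  springEnergy k₁ ℓ₁ x + springEnergy k₂ ℓ₂ (y - x)

section twoSpringPotential

variable {k₁ ℓ₁ k₂ ℓ₂ k₂' ℓ₂' x y y' : ℝ}

theorem deriv_twoSpringPotential_fst_eq (h : 0 < y - x) (h' : 0 < y' - x)
    (hforce : k₂ * (y - x - ℓ₂) = k₂' * (y' - x - ℓ₂')) :
    deriv (fun x' => twoSpringPotential k₁ ℓ₁ k₂ ℓ₂ x' y) x =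
      deriv (fun x' => twoSpringPotential k₁ ℓ₁ k₂' ℓ₂' x' y') x := by
  refine deriv_fun_add_congr_of_hasDerivAt (springEnergy k₁ ℓ₁)
    ((hasDerivAt_springEnergy k₂ ℓ₂ h).comp_const_sub y x) ?_
  rw [hforce]
  exact (hasDerivAt_springEnergy k₂' ℓ₂' h').comp_const_sub y' x

theorem hasDerivAt_twoSpringPotential_snd (h : 0 < y - x) :
    HasDerivAt (twoSpringPotential k₁ ℓ₁ k₂ ℓ₂ x) (k₂ * (y - x - ℓ₂)) y :=
  ((hasDerivAt_springEnergy k₂ ℓ₂ h).comp_sub_const y x).const_add _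

end twoSpringPotential

theorem two_mass_spring_nonidentifiable_general
    (k₁ k₂ kt₂ ℓ₁ ℓ₂ ℓt₂ : ℝ) (hkt₂ : 0 < kt₂)
    (q₁ q₂ : ℝ) (hpos : q₂ - q₁ > 0)
    (V Vt : ℝ → ℝ → ℝ)
    (hV : ∀ x y, V x y = k₁ / 2 * (|x| - ℓ₁) ^ 2 + k₂ / 2 * (|y - x| - ℓ₂) ^ 2)
    (hVt : ∀ x y, Vt x y = k₁ / 2 * (|x| - ℓ₁) ^ 2 + kt₂ / 2 * (|y - x| - ℓt₂) ^ 2)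
    (a : ℝ) (ha : a = (k₂ / kt₂ - 1) * (q₂ - q₁) - (k₂ / kt₂) * ℓ₂ + ℓt₂)
    (hpos' : q₂ + a - q₁ > 0) :
    deriv (fun x => V x q₂) q₁ = deriv (fun x => Vt x (q₂ + a)) q₁ ∧
      deriv (fun y => V q₁ y) q₂ = deriv (fun y => Vt q₁ y) (q₂ + a) := by
  obtain rfl : V = twoSpringPotential k₁ ℓ₁ k₂ ℓ₂ := funext₂ hV
  obtain rfl : Vt = twoSpringPotential k₁ ℓ₁ kt₂ ℓt₂ := funext₂ hVt
  have force_eq : k₂ * (q₂ - q₁ - ℓ₂) = kt₂ * (q₂ + a - q₁ - ℓt₂) := by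
    subst ha
    field_simp
    ring
  refine ⟨deriv_twoSpringPotential_fst_eq hpos hpos' force_eq, ?_⟩
  rw [(hasDerivAt_twoSpringPotential_snd hpos).deriv,
    (hasDerivAt_twoSpringPotential_snd hpos').deriv, force_eq]

/-- Non-identifiability of the latent coordinate in the two--mass two--spring system:
with `V(q₁,q₂) = (k₁/2)(|q₁| − ℓ₁)² + (k₂/2)(|q₂ − q₁| − ℓ₂)²` and
`Ṽ(q₁,q̃₂) = (k₁/2)(|q₁| − ℓ₁)² + (k̃₂/2)(|q̃₂ − q₁| − ℓ̃₂)²`, shifting the hidden mass by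
`a = (k₂/k̃₂ − 1)(q₂ − q₁) − (k₂/k̃₂)ℓ₂ + ℓ̃₂` produces identical partial derivatives. -/
theorem two_mass_spring_nonidentifiable
    (k₁ k₂ kt₂ ℓ₁ ℓ₂ ℓt₂ : ℝ) (hk₂ : 0 < k₂) (hkt₂ : 0 < kt₂)
    (q₁ q₂ : ℝ) (hpos : q₂ - q₁ > 0)
    (V Vt : ℝ → ℝ → ℝ)
    (hV : ∀ x y, V x y = k₁ / 2 * (|x| - ℓ₁) ^ 2 + k₂ / 2 * (|y - x| - ℓ₂) ^ 2)
    (hVt : ∀ x y, Vt x y = k₁ / 2 * (|x| - ℓ₁) ^ 2 + kt₂ / 2 * (|y - x| - ℓt₂) ^ 2)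
    (a : ℝ) (ha : a = (k₂ / kt₂ - 1) * (q₂ - q₁) - (k₂ / kt₂) * ℓ₂ + ℓt₂)
    (hpos' : q₂ + a - q₁ > 0) :
    deriv (fun x => V x q₂) q₁ = deriv (fun x => Vt x (q₂ + a)) q₁ ∧
      deriv (fun y => V q₁ y) q₂ = deriv (fun y => Vt q₁ y) (q₂ + a) :=
  two_mass_spring_nonidentifiable_general k₁ k₂ kt₂ ℓ₁ ℓ₂ ℓt₂ hkt₂ q₁ q₂ hpos V Vt hV hVt a ha hpos'
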